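/- For all λ > 0, μ > 0, σ ≥ 0, τ ≥ 0 and α > 2, setting G(h) := exp(−μτσ²h^α − λπ κ(τ,α) h²) with κ(τ,α) := τ^{2/α}∫_{τ^{−2/α}}^∞ (1+z^{α/2})^{−1}dz for τ > 0 and κ(0,α) := 0, one has (1+τ)^{−1} ∫₀^∞ G(h) · 4πλ^{3/2}h²e^{−λπh²} dh ≤ ∫₀^∞ G(h) · 2λπh e^{−λπh²} dh ≤ ∫₀^∞ G(h) · 2λ^{1/2} e^{−λπh²} dh. That is, the SINR coverage probabilities satisfy p_V^c ≤ p_t^c ≤ p_S^c: coverage at a typical handover is at most coverage at a typical time, which is at most coverage at a typical max-signal epoch. -/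

import Mathlib

/-!
The function `G` is nonincreasing on `(0, ∞)`, and the three densities are, up to normalisation,
`h ^ k * exp (-λπh²)` for `k = 2, 1, 0`. Consecutive members of this family have the increasing
likelihood ratio `h`, so by Chebyshev's integral inequality the mean of the nonincreasing `G`
decreases as `k` grows. The factor `(1 + τ)⁻¹ ≤ 1` only helps.
-/

open MeasureTheory Set Real

theorem AntivaryOn.setIntegral_mul_setIntegral_le {ι : Type*} [MeasurableSpace ι]
    {μ : Measure ι} [SFinite μ] {s : Set ι} (hs : MeasurableSet s) {f g w : ι → ℝ}
    (hfg : AntivaryOn f g s) (hw : ∀ x ∈ s, 0 ≤ w x) (hw_int : IntegrableOn w s μ)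
    (hfw : IntegrableOn (fun x => f x * w x) s μ) (hgw : IntegrableOn (fun x => g x * w x) s μ)
    (hfgw : IntegrableOn (fun x => f x * (g x * w x)) s μ) :
    (∫ x in s, w x ∂μ) * (∫ x in s, f x * (g x * w x) ∂μ) ≤
      (∫ x in s, f x * w x ∂μ) * ∫ x in s, g x * w x ∂μ := by
  set ν := μ.restrict s
  have hmem : ∀ᵐ p ∂ν.prod ν, p ∈ s ×ˢ s := by
    rw [Measure.prod_restrict]; exact ae_restrict_mem (hs.prod hs)
  -- Chebyshev's rearrangement inequality at each pair of points, integrated against `w ⊗ w`.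
  have key :
      ∫ p, w p.1 * (f p.2 * (g p.2 * w p.2)) + f p.1 * (g p.1 * w p.1) * w p.2 ∂ν.prod ν ≤
      ∫ p, f p.1 * w p.1 * (g p.2 * w p.2) + g p.1 * w p.1 * (f p.2 * w p.2) ∂ν.prod ν := by
    refine integral_mono_ae ((hw_int.mul_prod hfgw).add (hfgw.mul_prod hw_int))
      ((hfw.mul_prod hgw).add (hgw.mul_prod hfw)) (hmem.mono fun p hp => ?_)
    have hrearr := mul_le_mul_of_nonneg_right
      (antivaryOn_iff_mul_rearrangement.1 hfg hp.1 hp.2) (mul_nonneg (hw _ hp.1) (hw _ hp.2))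
    linarith
  rw [integral_add (hw_int.mul_prod hfgw) (hfgw.mul_prod hw_int),
    integral_add (hfw.mul_prod hgw) (hgw.mul_prod hfw),
    integral_prod_mul w (fun x => f x * (g x * w x)),
    integral_prod_mul (fun x => f x * (g x * w x)) w,
    integral_prod_mul (fun x => f x * w x) (fun x => g x * w x),
    integral_prod_mul (fun x => g x * w x) (fun x => f x * w x)] at key
  linarith

noncomputable def gaussWeight (b : ℝ) (k : ℕ) (x : ℝ) : ℝ := x ^ k * exp (-(b * x ^ 2))

/-- For `b = λπ`, the cases `k = 0, 1, 2` are the densities `f_{H_S}`, `f_R`, `f_{H_V}`. -/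
noncomputable def gaussDensity (b : ℝ) (k : ℕ) (x : ℝ) : ℝ :=
  gaussWeight b k x / ∫ y in Ioi 0, gaussWeight b k y

section GaussWeight

variable {b : ℝ}

lemma gaussWeight_succ (k : ℕ) (x : ℝ) : gaussWeight b (k + 1) x = x * gaussWeight b k x := by
  simp only [gaussWeight, pow_succ]; ring

lemma gaussWeight_nonneg (k : ℕ) {x : ℝ} (hx : 0 ≤ x) : 0 ≤ gaussWeight b k x := by
  unfold gaussWeight; positivity

lemma gaussWeight_eq_rpow (k : ℕ) (x : ℝ) :
    gaussWeight b k x = x ^ (k : ℝ) * exp (-b * x ^ (2 : ℝ)) := by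
  rw [gaussWeight, rpow_natCast, rpow_two, neg_mul]

lemma integrableOn_gaussWeight (hb : 0 < b) (k : ℕ) : IntegrableOn (gaussWeight b k) (Ioi 0) := by
  have hk : (-1 : ℝ) < k := by linarith [k.cast_nonneg (α := ℝ)]
  refine (integrableOn_rpow_mul_exp_neg_mul_sq hb hk).congr_fun (fun x _ => ?_) measurableSet_Ioi
  rw [gaussWeight_eq_rpow, rpow_two]

lemma setIntegral_gaussWeight (hb : 0 < b) (k : ℕ) :
    ∫ x in Ioi 0, gaussWeight b k x =
      b ^ (-((k : ℝ) + 1) / 2) * Gamma (((k : ℝ) + 1) / 2) / 2 := by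
  have hk : (-1 : ℝ) < k := by linarith [k.cast_nonneg (α := ℝ)]
  simp_rw [gaussWeight_eq_rpow]
  rw [integral_rpow_mul_exp_neg_mul_rpow two_pos hk hb]
  ring

lemma setIntegral_gaussWeight_pos (hb : 0 < b) (k : ℕ) :
    0 < ∫ x in Ioi 0, gaussWeight b k x := by
  rw [setIntegral_gaussWeight hb]
  have hΓ := Gamma_pos_of_pos (s := ((k : ℝ) + 1) / 2) (by positivity)
  positivity

lemma gaussDensity_eq (hb : 0 < b) (k : ℕ) (x : ℝ) :
    gaussDensity b k x =
      2 * b ^ (((k : ℝ) + 1) / 2) / Gamma (((k : ℝ) + 1) / 2) * gaussWeight b k x := by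
  rw [gaussDensity, setIntegral_gaussWeight hb, div_eq_inv_mul, neg_div, rpow_neg hb.le]
  have hΓ := Gamma_pos_of_pos (s := ((k : ℝ) + 1) / 2) (by positivity)
  field_simp

lemma setIntegral_mul_gaussDensity_succ_le (hb : 0 < b) {G : ℝ → ℝ} {C : ℝ}
    (hG : AntitoneOn G (Ioi 0)) (hGC : ∀ x ∈ Ioi 0, ‖G x‖ ≤ C) (k : ℕ) :
    ∫ x in Ioi 0, G x * gaussDensity b (k + 1) x ≤
      ∫ x in Ioi 0, G x * gaussDensity b k x := by
  have hG_int : ∀ j, IntegrableOn (fun x => G x * gaussWeight b j x) (Ioi 0) := fun j =>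
    (integrableOn_gaussWeight hb j).bdd_mul
      (aemeasurable_restrict_of_antitoneOn measurableSet_Ioi hG).aestronglyMeasurable
      ((ae_restrict_mem measurableSet_Ioi).mono hGC)
  have hcheb := (hG.antivaryOn monotoneOn_id).setIntegral_mul_setIntegral_le measurableSet_Ioi
    (fun _ hx => gaussWeight_nonneg k (le_of_lt hx)) (integrableOn_gaussWeight hb k) (hG_int k)
    (by simpa only [id, ← gaussWeight_succ] using integrableOn_gaussWeight hb (k + 1))
    (by simpa only [id, ← gaussWeight_succ] using hG_int (k + 1))
  simp only [id, ← gaussWeight_succ] at hcheb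
  simp only [gaussDensity, mul_div_assoc', integral_div]
  rw [div_le_div_iff₀ (setIntegral_gaussWeight_pos hb _) (setIntegral_gaussWeight_pos hb _)]
  linarith

end GaussWeight

section CoverageDensities

variable {lam : ℝ}

lemma gaussDensity_mul_pi_zero (hlam : 0 < lam) (x : ℝ) :
    gaussDensity (lam * π) 0 x = 2 * lam ^ ((1 : ℝ) / 2) * exp (-(lam * π * x ^ 2)) := by
  rw [gaussDensity_eq (by positivity), gaussWeight]
  norm_num [Gamma_one_half_eq, mul_rpow hlam.le pi_pos.le, sqrt_eq_rpow]
  field_simp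

lemma gaussDensity_mul_pi_one (hlam : 0 < lam) (x : ℝ) :
    gaussDensity (lam * π) 1 x = 2 * lam * π * x * exp (-(lam * π * x ^ 2)) := by
  rw [gaussDensity_eq (by positivity), gaussWeight]
  norm_num
  ring

lemma gaussDensity_mul_pi_two (hlam : 0 < lam) (x : ℝ) :
    gaussDensity (lam * π) 2 x =
      4 * π * lam ^ ((3 : ℝ) / 2) * x ^ 2 * exp (-(lam * π * x ^ 2)) := by
  rw [gaussDensity_eq (by positivity), gaussWeight,
    show ((2 : ℕ) + 1 : ℝ) / 2 = 1 / 2 + 1 by norm_num, Gamma_add_one (by norm_num),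
    Gamma_one_half_eq, mul_rpow hlam.le pi_pos.le, rpow_add pi_pos, rpow_one, sqrt_eq_rpow]
  norm_num
  field_simp
  ring

end CoverageDensities

section SignalDecay

variable {a c α : ℝ}

lemma antitoneOn_exp_neg_mul_rpow_sub_mul_sq (ha : 0 ≤ a) (hc : 0 ≤ c) (hα : 0 ≤ α) :
    AntitoneOn (fun x : ℝ => exp (-(a * x ^ α) - c * x ^ 2)) (Ici 0) := by
  intro x hx y _ hxy
  have hx2 : x ^ 2 ≤ y ^ 2 := pow_le_pow_left₀ hx hxy 2
  have hxα : x ^ α ≤ y ^ α := rpow_le_rpow hx hxy hα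
  simp only [exp_le_exp]
  nlinarith [mul_le_mul_of_nonneg_left hx2 hc, mul_le_mul_of_nonneg_left hxα ha]

lemma norm_exp_neg_mul_rpow_sub_mul_sq_le_one (ha : 0 ≤ a) (hc : 0 ≤ c) {x : ℝ}
    (hx : 0 ≤ x) :
    ‖exp (-(a * x ^ α) - c * x ^ 2)‖ ≤ 1 := by
  rw [norm_of_nonneg (exp_pos _).le, exp_le_one_iff]
  have hxα := rpow_nonneg hx α
  nlinarith [mul_nonneg ha hxα, mul_nonneg hc (sq_nonneg x)]

end SignalDecay

theorem stmt_17 (lam μ σ τ α : ℝ) (hlam : 0 < lam) (hμ : 0 < μ)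
    (hτ : 0 ≤ τ) (hα : 2 < α) (κ : ℝ)
    (hκ : κ = if τ = 0 then 0
      else τ ^ (2/α) * ∫ z in Ioi (τ ^ (-2/α)), (1 + z ^ (α/2))⁻¹)
    (G : ℝ → ℝ)
    (hG : ∀ h : ℝ, G h = Real.exp (-(μ * τ * σ ^ 2 * h ^ α) - lam * Real.pi * κ * h ^ 2)) :
    (1 + τ)⁻¹ *
        (∫ h in Ioi (0:ℝ), G h *
          (4 * Real.pi * lam ^ ((3:ℝ)/2) * h ^ 2 * Real.exp (-(lam * Real.pi * h ^ 2)))) ≤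
      (∫ h in Ioi (0:ℝ), G h *
        (2 * lam * Real.pi * h * Real.exp (-(lam * Real.pi * h ^ 2)))) ∧
    (∫ h in Ioi (0:ℝ), G h *
        (2 * lam * Real.pi * h * Real.exp (-(lam * Real.pi * h ^ 2)))) ≤
      ∫ h in Ioi (0:ℝ), G h *
        (2 * lam ^ ((1:ℝ)/2) * Real.exp (-(lam * Real.pi * h ^ 2))) := by
  have hκ_nonneg : 0 ≤ κ := by
    rw [hκ]
    split_ifs
    · exact le_rfl
    · refine mul_nonneg (rpow_nonneg hτ _) (setIntegral_nonneg measurableSet_Ioi fun z hz => ?_)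
      have hzα := rpow_nonneg ((rpow_nonneg hτ _).trans hz.le) (α / 2)
      positivity
  have ha : 0 ≤ μ * τ * σ ^ 2 := by positivity
  have hc : 0 ≤ lam * π * κ := by positivity
  have hG_anti : AntitoneOn G (Ioi 0) := by
    rw [funext hG]
    exact (antitoneOn_exp_neg_mul_rpow_sub_mul_sq ha hc (by linarith)).mono Ioi_subset_Ici_self
  have hG_le : ∀ x ∈ Ioi 0, ‖G x‖ ≤ 1 := fun x hx =>
    hG x ▸ norm_exp_neg_mul_rpow_sub_mul_sq_le_one ha hc (le_of_lt hx)
  have hpV_nonneg : 0 ≤ ∫ h in Ioi (0:ℝ), G h *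
      (4 * π * lam ^ ((3:ℝ)/2) * h ^ 2 * exp (-(lam * π * h ^ 2))) :=
    setIntegral_nonneg measurableSet_Ioi fun h _ => by rw [hG]; positivity
  have hτ_inv : (1 + τ)⁻¹ ≤ 1 := inv_le_one_of_one_le₀ (by linarith)
  refine ⟨(mul_le_of_le_one_left hpV_nonneg hτ_inv).trans ?_, ?_⟩
  all_goals simp only [← gaussDensity_mul_pi_zero hlam, ← gaussDensity_mul_pi_one hlam,
    ← gaussDensity_mul_pi_two hlam]
  exacts [setIntegral_mul_gaussDensity_succ_le (by positivity) hG_anti hG_le 1,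
    setIntegral_mul_gaussDensity_succ_le (by positivity) hG_anti hG_le 0]
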